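/- Let n ≥ 1 be an integer and let f satisfy (A1) and (A2) with constant m > 0. If (u,v) is a positive solution of the system −u''(r) − ((n−1)/r) u'(r) = f(r, u(r), v(r)) and −v''(r) − ((n−1)/r) v'(r) = f(r, v(r), u(r)) for r > 0, with u'(0) = v'(0) = 0 and u(r), v(r) → 0 as r → ∞, then there exists c > 0 such that u(r) + v(r) + |u'(r)| + |v'(r)| ≤ c·e^{−√m·r} for all r > 0. -/

import Mathlib

open Real Set Filter

/-- `u` is twice continuously differentiable on `[0,∞)`, with first and second
derivative functions `u'` and `u''`. -/
def C2 (u u' u'' : ℝ → ℝ) : Prop :=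
  (∀ r ∈ Set.Ici (0:ℝ), HasDerivWithinAt u (u' r) (Set.Ici 0) r) ∧
  (∀ r ∈ Set.Ici (0:ℝ), HasDerivWithinAt u' (u'' r) (Set.Ici 0) r) ∧
  ContinuousOn u'' (Set.Ici 0)

/-- Assumption (A1): `f : [0,∞)³ → ℝ` is continuous, locally Lipschitz on `(0,∞)³`,
and satisfies the stated growth bound. -/
def A1 (f : ℝ → ℝ → ℝ → ℝ) : Prop :=
  ContinuousOn (fun p : ℝ × ℝ × ℝ => f p.1 p.2.1 p.2.2)
    {p : ℝ × ℝ × ℝ | 0 ≤ p.1 ∧ 0 ≤ p.2.1 ∧ 0 ≤ p.2.2} ∧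
  (∀ p : ℝ × ℝ × ℝ, 0 < p.1 → 0 < p.2.1 → 0 < p.2.2 →
    ∃ K : NNReal, ∃ δ > 0, LipschitzOnWith K (fun p : ℝ × ℝ × ℝ => f p.1 p.2.1 p.2.2)
      (Metric.ball p δ ∩ {p : ℝ × ℝ × ℝ | 0 < p.1 ∧ 0 < p.2.1 ∧ 0 < p.2.2})) ∧
  (∃ p : ℝ, 1 < p ∧ ∃ C : ℝ, 0 < C ∧ ∀ r z₁ z₂ : ℝ, 0 ≤ r → 0 ≤ z₁ → 0 ≤ z₂ →
    |f r z₁ z₂| ≤ C * (|z₁| + |z₂| + |z₁| ^ p + |z₂| ^ p))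

/-- `(u,v)` (with derivative data) is a positive solution of the radial system
`-u'' - ((n-1)/r) u' = f(r,u,v)`, `-v'' - ((n-1)/r) v' = f(r,v,u)` on `(0,∞)`,
with `u'(0) = v'(0) = 0` and `u(r), v(r) → 0` as `r → ∞`. -/
def IsPosSol (n : ℕ) (f : ℝ → ℝ → ℝ → ℝ) (u u' u'' v v' v'' : ℝ → ℝ) : Prop :=
  C2 u u' u'' ∧ C2 v v' v'' ∧
  (∀ r : ℝ, 0 ≤ r → 0 < u r ∧ 0 < v r) ∧
  (∀ r : ℝ, 0 < r → -u'' r - ((n : ℝ) - 1) / r * u' r = f r (u r) (v r)) ∧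
  (∀ r : ℝ, 0 < r → -v'' r - ((n : ℝ) - 1) / r * v' r = f r (v r) (u r)) ∧
  u' 0 = 0 ∧ v' 0 = 0 ∧
  Tendsto u atTop (nhds 0) ∧ Tendsto v atTop (nhds 0)

/-!
For large `r` both `u` and `v` lie in `(0, ε)`, so adding the two equations and using (A2)
(extended to the diagonal `z₁ = z₂` by continuity) gives `w'' + ((n-1)/r) w' ≥ m w` for
`w = u + v`. A maximum principle compares `w` with `A e^{-√m r}`, which solves `y'' = m y`:
an interior positive maximum of their difference would have vanishing first and positive
second derivative. Given this decay, each equation bounds `|u''|` by `n |u'|` plus an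
exponentially small term; the mean value theorem on `[r - 1, r]` produces a point where `|u'|`
is exponentially small, and Grönwall's inequality carries this bound to `r`. On the compact
range left over, everything is bounded by continuity.
-/

open Topology

lemma IsLocalMax.second_deriv_nonpos {g g' : ℝ → ℝ} {x c : ℝ} (hmax : IsLocalMax g x)
    (hg : ∀ᶠ y in 𝓝 x, HasDerivAt g (g' y) y) (hg' : HasDerivAt g' c x) : c ≤ 0 := by
  by_contra! hc
  have hg'x : g' x = 0 := hmax.hasDerivAt_eq_zero hg.self_of_nhds
  have hslope := (hasDerivAt_iff_tendsto_slope.mp hg').mono_left (nhdsGT_le_nhdsNE x)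
  have hright : ∀ᶠ y in 𝓝[>] x, 0 < g' y ∧ HasDerivAt g (g' y) y ∧ g y ≤ g x := by
    filter_upwards [hslope.eventually (eventually_gt_nhds hc), self_mem_nhdsWithin,
      nhdsWithin_le_nhds (hg.and hmax)] with y hy hxy hgy
    exact ⟨pos_of_slope_pos hxy hy hg'x, hgy⟩
  obtain ⟨b, hxb, hb⟩ := mem_nhdsGT_iff_exists_Ioo_subset.mp hright
  set y := (x + b) / 2
  have hxy : x < y := by simp only [y]; linarith [mem_Ioi.mp hxb]
  have hyb : y < b := by simp only [y]; linarith [mem_Ioi.mp hxb]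
  have hderiv : ∀ z ∈ Ioo x y, HasDerivAt g (g' z) z := fun z hz =>
    (hb ⟨hz.1, hz.2.trans hyb⟩).2.1
  have hcont : ContinuousOn g (Icc x y) := by
    intro z hz
    rcases hz.1.eq_or_lt with rfl | hxz
    · exact hg.self_of_nhds.continuousAt.continuousWithinAt
    · exact (hb ⟨hxz, hz.2.trans_lt hyb⟩).2.1.continuousAt.continuousWithinAt
  obtain ⟨ξ, hξ, hξslope⟩ := exists_hasDerivAt_eq_slope g g' hxy hcont hderiv
  have hgξ : 0 < (g y - g x) / (y - x) := hξslope ▸ (hb ⟨hξ.1, hξ.2.trans hyb⟩).1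
  have hgy : g y ≤ g x := (hb ⟨hxy, hyb⟩).2.2
  have := (div_pos_iff_of_pos_right (sub_pos.mpr hxy)).mp hgξ
  linarith

lemma hasDerivAt_mul_exp_neg_mul (A k x : ℝ) :
    HasDerivAt (fun y => A * exp (-k * y)) (-(A * k * exp (-k * x))) x :=
  ((((hasDerivAt_id' x).const_mul (-k)).exp).const_mul A).congr_deriv (by ring)

lemma le_mul_exp_of_sq_mul_le_second_deriv {w w' w'' b : ℝ → ℝ} {a k A : ℝ}
    (hk : 0 < k) (hA : 0 ≤ A) (hcont : ContinuousOn w (Ici a))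
    (hw : ∀ x, a < x → HasDerivAt w (w' x) x) (hw' : ∀ x, a < x → HasDerivAt w' (w'' x) x)
    (hb : ∀ x, a < x → 0 ≤ b x) (hineq : ∀ x, a < x → k ^ 2 * w x ≤ w'' x + b x * w' x)
    (hlim : Tendsto w atTop (𝓝 0)) (ha : w a ≤ A * exp (-k * a)) :
    ∀ x, a ≤ x → w x ≤ A * exp (-k * x) := by
  set g := fun x => w x - A * exp (-k * x) with hg_def
  by_contra! ⟨x₁, hax₁, hx₁⟩
  have hgx₁ : 0 < g x₁ := sub_pos.mpr hx₁
  have hglim : Tendsto g atTop (𝓝 0) := by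
    simpa [hg_def] using hlim.sub ((tendsto_exp_atBot.comp
      (tendsto_id.const_mul_atTop_of_neg (neg_neg_of_pos hk))).const_mul A)
  have hfar : ∀ᶠ x in cocompact ℝ ⊓ 𝓟 (Ici a), g x ≤ g x₁ := by
    rw [cocompact_eq_atBot_atTop, inf_sup_right, eventually_sup]
    refine ⟨eventually_inf_principal.mpr ((eventually_lt_atBot a).mono fun x hxa hax => ?_),
      (hglim.eventually (ge_mem_nhds hgx₁)).filter_mono inf_le_left⟩
    exact absurd hax (not_le.mpr hxa)
  obtain ⟨x₀, hx₀, hmax⟩ :=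
    (hcont.sub (by fun_prop)).exists_isMaxOn' isClosed_Ici hax₁ hfar
  have hgx₁x₀ : g x₁ ≤ g x₀ := hmax hax₁
  have hax₀ : a < x₀ := by
    refine lt_of_le_of_ne hx₀ fun h => ?_
    have : g x₁ ≤ g a := h ▸ hgx₁x₀
    simp only [hg_def] at this
    linarith
  have hlocmax : IsLocalMax g x₀ := hmax.isLocalMax (Ici_mem_nhds hax₀)
  have hg' : ∀ x, a < x → HasDerivAt g (w' x + A * k * exp (-k * x)) x := fun x hx =>
    ((hw x hx).sub (hasDerivAt_mul_exp_neg_mul A k x)).congr_deriv (by ring)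
  have hg'' : HasDerivAt (fun x => w' x + A * k * exp (-k * x))
      (w'' x₀ - A * k ^ 2 * exp (-k * x₀)) x₀ :=
    ((hw' x₀ hax₀).add (hasDerivAt_mul_exp_neg_mul (A * k) k x₀)).congr_deriv (by ring)
  have hw'x₀ : w' x₀ ≤ 0 := by
    have := hlocmax.hasDerivAt_eq_zero (hg' x₀ hax₀)
    have : 0 ≤ A * k * exp (-k * x₀) := by positivity
    linarith
  have hw''x₀ := hlocmax.second_deriv_nonpos ((eventually_gt_nhds hax₀).mono hg') hg''
  have hbw' : b x₀ * w' x₀ ≤ 0 := mul_nonpos_of_nonneg_of_nonpos (hb x₀ hax₀) hw'x₀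
  have hgx₀ : k ^ 2 * g x₀ ≤ 0 := by
    simp only [hg_def]
    linarith [hineq x₀ hax₀]
  nlinarith [sq_pos_of_pos hk]

lemma gronwallBound_le_of_le_one {δ K ε t : ℝ} (hδ : 0 ≤ δ) (hε : 0 ≤ ε) (hK : 1 ≤ K)
    (ht : t ≤ 1) : gronwallBound δ K ε t ≤ (δ + ε) * exp K := by
  calc gronwallBound δ K ε t ≤ gronwallBound δ K ε 1 :=
        gronwallBound_mono hδ hε (by linarith) ht
    _ = δ * exp K + ε / K * (exp K - 1) := by
        rw [gronwallBound_of_K_ne_0 (by linarith)]; simp only [mul_one]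
    _ ≤ δ * exp K + ε * exp K := by
        have : 0 ≤ exp K - 1 := by linarith [add_one_le_exp K]
        have : ε / K * (exp K - 1) ≤ ε * (exp K - 1) := by gcongr; exact div_le_self hε hK
        linarith
    _ = (δ + ε) * exp K := by ring

lemma abs_le_of_abs_deriv_le_of_sub_le_one {y y' : ℝ → ℝ} {a b δ K ε : ℝ} (hK : 1 ≤ K)
    (hε : 0 ≤ ε) (hab : a ≤ b) (hba : b - a ≤ 1) (hy : ∀ x ∈ Icc a b, HasDerivAt y (y' x) x)
    (ha : |y a| ≤ δ) (bound : ∀ x ∈ Ico a b, |y' x| ≤ K * |y x| + ε) :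
    |y b| ≤ (δ + ε) * exp K :=
  (norm_le_gronwallBound_of_norm_deriv_right_le
    (fun x hx => (hy x hx).continuousAt.continuousWithinAt)
    (fun x hx => (hy x (Ico_subset_Icc_self hx)).hasDerivWithinAt) ha bound b
    (right_mem_Icc.mpr hab)).trans
    (gronwallBound_le_of_le_one ((abs_nonneg _).trans ha) hε hK hba)

lemma abs_deriv_le_mul_exp {y y' y'' : ℝ → ℝ} {a k K B D : ℝ} (hk : 0 ≤ k) (hK : 1 ≤ K)
    (hD : 0 ≤ D) (hy : ∀ x, a < x → HasDerivAt y (y' x) x)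
    (hy' : ∀ x, a < x → HasDerivAt y' (y'' x) x)
    (hy_le : ∀ x, a < x → |y x| ≤ B * exp (-k * x))
    (hy''_le : ∀ x, a < x → |y'' x| ≤ K * |y' x| + D * exp (-k * x)) (x : ℝ) (hx : a + 1 < x) :
    |y' x| ≤ (2 * B + D) * exp k * exp K * exp (-k * x) := by
  have hB : 0 ≤ B := nonneg_of_mul_nonneg_left ((abs_nonneg _).trans (hy_le x (by linarith)))
    (exp_pos _)
  have hexp_le : ∀ t, x - 1 ≤ t → exp (-k * t) ≤ exp (-k * (x - 1)) := fun t ht =>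
    exp_le_exp.mpr (by nlinarith)
  obtain ⟨ξ, hξ, hξslope⟩ := exists_hasDerivAt_eq_slope y y' (sub_one_lt x)
    (fun t ht => (hy t (by linarith [ht.1])).continuousAt.continuousWithinAt)
    (fun t ht => hy t (by linarith [ht.1]))
  have hy'ξ : |y' ξ| ≤ 2 * B * exp (-k * (x - 1)) := by
    rw [hξslope, sub_sub_cancel, div_one]
    calc |y x - y (x - 1)| ≤ |y x| + |y (x - 1)| := abs_sub _ _
      _ ≤ B * exp (-k * x) + B * exp (-k * (x - 1)) :=
          add_le_add (hy_le x (by linarith)) (hy_le (x - 1) (by linarith))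
      _ ≤ 2 * B * exp (-k * (x - 1)) := by
          nlinarith [mul_le_mul_of_nonneg_left (hexp_le x (by linarith)) hB]
  have hbound : ∀ t ∈ Ico ξ x, |y'' t| ≤ K * |y' t| + D * exp (-k * (x - 1)) := by
    intro t ht
    have hξt : x - 1 < t := hξ.1.trans_le ht.1
    have := mul_le_mul_of_nonneg_left (hexp_le t hξt.le) hD
    linarith [hy''_le t (by linarith)]
  calc |y' x| ≤ (2 * B * exp (-k * (x - 1)) + D * exp (-k * (x - 1))) * exp K :=
        abs_le_of_abs_deriv_le_of_sub_le_one hK (by positivity) hξ.2.le (by linarith [hξ.1])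
          (fun t ht => hy' t (by linarith [hξ.1, ht.1])) hy'ξ hbound
    _ = (2 * B + D) * exp k * exp K * exp (-k * x) := by
      rw [show -k * (x - 1) = k + -k * x by ring, exp_add]; ring

lemma exists_forall_le_mul_exp_of_forall_gt {F : ℝ → ℝ} {k T B : ℝ}
    (hF : ContinuousOn F (Icc 0 T)) (hT : ∀ x, T < x → F x ≤ B * exp (-k * x)) :
    ∃ c > 0, ∀ x, 0 ≤ x → F x ≤ c * exp (-k * x) := by
  obtain ⟨M, hM⟩ := isCompact_Icc.bddAbove_image
    (hF.mul (continuous_exp.comp (continuous_const_mul k)).continuousOn)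
  refine ⟨max (max B M) 1, by positivity, fun x hx => ?_⟩
  rcases le_or_gt x T with hxT | hxT
  · have hFx : F x * exp (k * x) ≤ M := hM ⟨x, ⟨hx, hxT⟩, rfl⟩
    calc F x = F x * exp (k * x) * exp (-k * x) := by
          rw [mul_assoc, ← exp_add]; ring_nf; rw [exp_zero, mul_one]
      _ ≤ max (max B M) 1 * exp (-k * x) :=
          mul_le_mul_of_nonneg_right (hFx.trans (le_max_of_le_left (le_max_right _ _)))
            (exp_pos _).le
  · exact (hT x hxT).trans (by gcongr; exact le_max_of_le_left (le_max_left _ _))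

lemma A1.continuousAt {f : ℝ → ℝ → ℝ → ℝ} (hf : A1 f) {p : ℝ × ℝ × ℝ}
    (hp : 0 < p.1 ∧ 0 < p.2.1 ∧ 0 < p.2.2) :
    ContinuousAt (fun p : ℝ × ℝ × ℝ => f p.1 p.2.1 p.2.2) p :=
  hf.1.continuousAt <| mem_of_superset
    ((isOpen_Ioi.prod (isOpen_Ioi.prod isOpen_Ioi)).mem_nhds hp)
    fun _ hq => ⟨hq.1.le, hq.2.1.le, hq.2.2.le⟩

lemma A1.exists_abs_le {f : ℝ → ℝ → ℝ → ℝ} (hf : A1 f) :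
    ∃ C, 0 ≤ C ∧ ∀ r z₁ z₂ : ℝ, 0 ≤ r → z₁ ∈ Icc 0 1 → z₂ ∈ Icc 0 1 →
      |f r z₁ z₂| ≤ C * (z₁ + z₂) := by
  obtain ⟨p, hp, C, hC, hgrowth⟩ := hf.2.2
  refine ⟨2 * C, by positivity, fun r z₁ z₂ hr hz₁ hz₂ => ?_⟩
  have h₁ := rpow_le_self_of_le_one hz₁.1 hz₁.2 hp.le
  have h₂ := rpow_le_self_of_le_one hz₂.1 hz₂.2 hp.le
  have := hgrowth r z₁ z₂ hr hz₁.1 hz₂.1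
  rw [abs_of_nonneg hz₁.1, abs_of_nonneg hz₂.1] at this
  nlinarith

lemma add_le_neg_mul_of_A1_of_A2 {f : ℝ → ℝ → ℝ → ℝ} {m R ε : ℝ} (hf : A1 f)
    (hA2 : ∀ r > R, ∀ z₁ ∈ Set.Ioo 0 ε, ∀ z₂ ∈ Set.Ioo 0 ε, z₁ ≠ z₂ →
      (f r z₁ z₂ - f r z₂ z₁) / (z₁ - z₂) ≤ -m ∧
      (f r z₁ z₂ + f r z₂ z₁) / (z₁ + z₂) ≤ -m)
    {r a b : ℝ} (hR : R < r) (hr : 0 < r) (ha : a ∈ Ioo 0 ε) (hb : b ∈ Ioo 0 ε) :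
    f r a b + f r b a ≤ -m * (a + b) := by
  have hoff : ∀ t ∈ Ioo 0 ε, a ≠ t → f r a t + f r t a ≤ -m * (a + t) := fun t ht hat =>
    by linarith [(div_le_iff₀ (add_pos ha.1 ht.1)).mp (hA2 r hR a ha t ht hat).2]
  rcases ne_or_eq a b with hab | rfl
  · exact hoff b hb hab
  have hcont : ContinuousAt (fun t => f r a t + f r t a + m * (a + t)) a := by
    have h₁ := (hf.continuousAt ⟨hr, ha.1, ha.1⟩).comp (x := a)
      (by fun_prop : ContinuousAt (fun t : ℝ => (r, a, t)) a)
    have h₂ := (hf.continuousAt ⟨hr, ha.1, ha.1⟩).comp (x := a)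
      (by fun_prop : ContinuousAt (fun t : ℝ => (r, t, a)) a)
    exact (h₁.add h₂).add (by fun_prop)
  have : f r a a + f r a a + m * (a + a) ≤ 0 := by
    refine le_of_tendsto (hcont.tendsto.mono_left (nhdsWithin_le_nhds : 𝓝[≠] a ≤ 𝓝 a)) ?_
    filter_upwards [nhdsWithin_le_nhds (isOpen_Ioo.mem_nhds ha), self_mem_nhdsWithin]
      with t ht hta
    linarith [hoff t ht (Ne.symm hta)]
  linarith

lemma C2.hasDerivAt {u u' u'' : ℝ → ℝ} (hu : C2 u u' u'') {x : ℝ} (hx : 0 < x) :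
    HasDerivAt u (u' x) x ∧ HasDerivAt u' (u'' x) x :=
  ⟨(hu.1 x hx.le).hasDerivAt (Ici_mem_nhds hx), (hu.2.1 x hx.le).hasDerivAt (Ici_mem_nhds hx)⟩

lemma C2.continuousOn {u u' u'' : ℝ → ℝ} (hu : C2 u u' u'') :
    ContinuousOn u (Ici 0) ∧ ContinuousOn u' (Ici 0) :=
  ⟨fun x hx => (hu.1 x hx).continuousWithinAt, fun x hx => (hu.2.1 x hx).continuousWithinAt⟩

lemma abs_le_of_radial_eq {n : ℕ} (hn : 1 ≤ n) {x y' y'' F : ℝ} (hx : 1 ≤ x)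
    (h : -y'' - ((n : ℝ) - 1) / x * y' = F) : |y''| ≤ n * |y'| + |F| := by
  have hn' : (1 : ℝ) ≤ n := by exact_mod_cast hn
  have hc₀ : 0 ≤ ((n : ℝ) - 1) / x := div_nonneg (by linarith) (by linarith)
  have hc₁ : ((n : ℝ) - 1) / x ≤ n := (div_le_self (by linarith) hx).trans (by linarith)
  rw [show y'' = -(((n : ℝ) - 1) / x * y') - F by linarith]
  calc |-(((n : ℝ) - 1) / x * y') - F| ≤ ((n : ℝ) - 1) / x * |y'| + |F| :=
        (abs_sub _ _).trans (by rw [abs_neg, abs_mul, abs_of_nonneg hc₀])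
    _ ≤ n * |y'| + |F| := by gcongr

namespace IsPosSol

variable {n : ℕ} {f : ℝ → ℝ → ℝ → ℝ} {u u' u'' v v' v'' : ℝ → ℝ}

lemma swap (hsol : IsPosSol n f u u' u'' v v' v'') : IsPosSol n f v v' v'' u u' u'' :=
  let ⟨hu, hv, hpos, hequ, heqv, hu'0, hv'0, hulim, hvlim⟩ := hsol
  ⟨hv, hu, fun r hr => (hpos r hr).symm, heqv, hequ, hv'0, hu'0, hvlim, hulim⟩

lemma eventually_lt (hsol : IsPosSol n f u u' u'' v v' v'') {δ : ℝ} (hδ : 0 < δ) :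
    ∀ᶠ x in atTop, u x < δ ∧ v x < δ := by
  obtain ⟨-, -, -, -, -, -, -, hulim, hvlim⟩ := hsol
  exact (hulim.eventually_lt_const hδ).and (hvlim.eventually_lt_const hδ)

lemma add_le_mul_exp (hsol : IsPosSol n f u u' u'' v v' v'') (hn : 1 ≤ n) {m R ε a : ℝ}
    (hm : 0 < m) (hf : A1 f)
    (hA2 : ∀ r > R, ∀ z₁ ∈ Set.Ioo 0 ε, ∀ z₂ ∈ Set.Ioo 0 ε, z₁ ≠ z₂ →
      (f r z₁ z₂ - f r z₂ z₁) / (z₁ - z₂) ≤ -m ∧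
      (f r z₁ z₂ + f r z₂ z₁) / (z₁ + z₂) ≤ -m)
    (ha : 0 < a) (hsmall : ∀ x, a ≤ x → R < x ∧ u x < ε ∧ v x < ε) :
    ∀ x, a ≤ x → u x + v x ≤ (u a + v a) * exp (√m * a) * exp (-√m * x) := by
  obtain ⟨hu, hv, hpos, hequ, heqv, -, -, hulim, hvlim⟩ := hsol
  have hn' : (1 : ℝ) ≤ n := by exact_mod_cast hn
  refine le_mul_exp_of_sq_mul_le_second_deriv (w' := fun x => u' x + v' x)
    (w'' := fun x => u'' x + v'' x) (b := fun x => ((n : ℝ) - 1) / x) (sqrt_pos.mpr hm)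
    (mul_nonneg (add_pos (hpos a ha.le).1 (hpos a ha.le).2).le (exp_pos _).le)
    ((hu.continuousOn.1.add hv.continuousOn.1).mono (Ici_subset_Ici.mpr ha.le))
    (fun x hx => (hu.hasDerivAt (ha.trans hx)).1.add (hv.hasDerivAt (ha.trans hx)).1)
    (fun x hx => (hu.hasDerivAt (ha.trans hx)).2.add (hv.hasDerivAt (ha.trans hx)).2)
    (fun x hx => div_nonneg (by linarith) (ha.trans hx).le) (fun x hx => ?_)
    (by simpa using hulim.add hvlim)
    (by rw [mul_assoc, ← exp_add, neg_mul, add_neg_cancel, exp_zero, mul_one])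
  have hx₀ := ha.trans hx
  obtain ⟨hRx, hux, hvx⟩ := hsmall x hx.le
  have hsum := add_le_neg_mul_of_A1_of_A2 hf hA2 hRx hx₀
    ⟨(hpos x hx₀.le).1, hux⟩ ⟨(hpos x hx₀.le).2, hvx⟩
  rw [sq_sqrt hm.le, mul_add]
  linarith [hequ x hx₀, heqv x hx₀]

lemma exists_abs_deriv_le_mul_exp (hsol : IsPosSol n f u u' u'' v v' v'') (hn : 1 ≤ n)
    (hf : A1 f) {a k A : ℝ} (hk : 0 ≤ k) (ha : 1 ≤ a)
    (hsmall : ∀ x, a ≤ x → u x ≤ 1 ∧ v x ≤ 1)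
    (hdecay : ∀ x, a ≤ x → u x + v x ≤ A * exp (-k * x)) :
    ∃ B, ∀ x, a + 1 < x → |u' x| ≤ B * exp (-k * x) := by
  obtain ⟨hu, -, hpos, hequ, -⟩ := hsol
  obtain ⟨C, hC, hfC⟩ := hf.exists_abs_le
  have hA : 0 ≤ A := nonneg_of_mul_nonneg_left
    ((add_pos (hpos a (by linarith)).1 (hpos a (by linarith)).2).le.trans (hdecay a le_rfl))
    (exp_pos _)
  have hx₀ : ∀ x, a < x → 0 < x := fun x hx => by linarith
  refine ⟨_, abs_deriv_le_mul_exp (K := n) (B := A) (D := C * A) hk (by exact_mod_cast hn)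
    (by positivity) (fun x hx => (hu.hasDerivAt (hx₀ x hx)).1)
    (fun x hx => (hu.hasDerivAt (hx₀ x hx)).2) (fun x hx => ?_) (fun x hx => ?_)⟩
  · have := (hpos x (hx₀ x hx).le).2
    rw [abs_of_pos (hpos x (hx₀ x hx).le).1]
    linarith [hdecay x hx.le]
  · have hux : u x ∈ Icc 0 1 := ⟨(hpos x (hx₀ x hx).le).1.le, (hsmall x hx.le).1⟩
    have hvx : v x ∈ Icc 0 1 := ⟨(hpos x (hx₀ x hx).le).2.le, (hsmall x hx.le).2⟩
    have hfx := (hfC x (u x) (v x) (hx₀ x hx).le hux hvx).trans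
      (mul_le_mul_of_nonneg_left (hdecay x hx.le) hC)
    have := abs_le_of_radial_eq hn (by linarith) (hequ x (hx₀ x hx))
    linarith

end IsPosSol

theorem exponential_decay_general (n : ℕ) (hn : 1 ≤ n) (f : ℝ → ℝ → ℝ → ℝ)
    (m R ε : ℝ) (hm : 0 < m) (hε : 0 < ε)
    (hA1 : A1 f)
    (hA2 : ∀ r > R, ∀ z₁ ∈ Set.Ioo 0 ε, ∀ z₂ ∈ Set.Ioo 0 ε, z₁ ≠ z₂ →
      (f r z₁ z₂ - f r z₂ z₁) / (z₁ - z₂) ≤ -m ∧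
      (f r z₁ z₂ + f r z₂ z₁) / (z₁ + z₂) ≤ -m)
    (u u' u'' v v' v'' : ℝ → ℝ)
    (hsol : IsPosSol n f u u' u'' v v' v'') :
    ∃ c > 0, ∀ r > (0:ℝ),
      u r + v r + |u' r| + |v' r| ≤ c * Real.exp (-Real.sqrt m * r) := by
  obtain ⟨a, ha⟩ := ((eventually_ge_atTop 1).and ((eventually_gt_atTop R).and
    (hsol.eventually_lt (lt_min hε one_pos)))).exists_forall_of_atTop
  have ha₁ : 1 ≤ a := (ha a le_rfl).1
  have hdecay := hsol.add_le_mul_exp hn hm hA1 hA2 (by linarith) fun x hx =>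
    ⟨(ha x hx).2.1, (ha x hx).2.2.1.trans_le (min_le_left _ _),
      (ha x hx).2.2.2.trans_le (min_le_left _ _)⟩
  have hle_one : ∀ x, a ≤ x → u x ≤ 1 ∧ v x ≤ 1 := fun x hx =>
    ⟨((ha x hx).2.2.1.trans_le (min_le_right _ _)).le,
      ((ha x hx).2.2.2.trans_le (min_le_right _ _)).le⟩
  obtain ⟨Bu, hBu⟩ := hsol.exists_abs_deriv_le_mul_exp hn hA1 (sqrt_nonneg m) ha₁ hle_one hdecay
  obtain ⟨Bv, hBv⟩ := hsol.swap.exists_abs_deriv_le_mul_exp hn hA1 (sqrt_nonneg m) ha₁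
    (fun x hx => (hle_one x hx).symm) (fun x hx => add_comm (v x) (u x) ▸ hdecay x hx)
  have hcont := hsol.1.continuousOn
  have hcont' := hsol.2.1.continuousOn
  obtain ⟨c, hc, hcF⟩ := exists_forall_le_mul_exp_of_forall_gt
    (F := fun r => u r + v r + |u' r| + |v' r|) (k := √m) (T := a + 1)
    (B := (u a + v a) * exp (√m * a) + Bu + Bv)
    ((((hcont.1.add hcont'.1).add hcont.2.abs).add hcont'.2.abs).mono Icc_subset_Ici_self)
    fun x hx => by
      rw [add_mul, add_mul]
      linarith [hdecay x (by linarith), hBu x hx, hBv x hx]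
  exact ⟨c, hc, fun r hr => hcF r hr.le⟩

/-- Exponential decay of positive solutions under (A1) and (A2). -/
theorem exponential_decay (n : ℕ) (hn : 1 ≤ n) (f : ℝ → ℝ → ℝ → ℝ)
    (m R ε : ℝ) (hm : 0 < m) (hR : 0 < R) (hε : 0 < ε)
    (hA1 : A1 f)
    (hA2 : ∀ r > R, ∀ z₁ ∈ Set.Ioo 0 ε, ∀ z₂ ∈ Set.Ioo 0 ε, z₁ ≠ z₂ →
      (f r z₁ z₂ - f r z₂ z₁) / (z₁ - z₂) ≤ -m ∧
      (f r z₁ z₂ + f r z₂ z₁) / (z₁ + z₂) ≤ -m)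
    (u u' u'' v v' v'' : ℝ → ℝ)
    (hsol : IsPosSol n f u u' u'' v v' v'') :
    ∃ c > 0, ∀ r > (0:ℝ),
      u r + v r + |u' r| + |v' r| ≤ c * Real.exp (-Real.sqrt m * r) :=
  exponential_decay_general n hn f m R ε hm hε hA1 hA2 u u' u'' v v' v'' hsol
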